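/- Let T be a finite tree (a connected acyclic simple graph). Suppose each vertex v of T is assigned a list L(v) of 2 distinct real numbers. Then there is a coloring f of the vertices with f(v) ∈ L(v) for every vertex v, such that Σ_{x ∈ N(u)} f(x) ≠ Σ_{x ∈ N(v)} f(x) for every pair of adjacent vertices u and v. -/

import Mathlib

/-!
Root the tree and let `par v` be the parent of `v`, so that the edges are exactly the pairs
`{v, par v}` with `v` not the root. Let `δ = ±1` be the sign of a proper 2-colouring. For
`f = δ g` and an edge `uw` one has `N_f(u) - N_f(w) = -δ(u) (N_g(u) + N_g(w))`, where `N_g` is the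
neighbourhood sum of `g`; so it suffices to find `g` from the lists `δ(v) L(v)` with
`N_g(v) + N_g(par v) ≠ 0` for all non-root `v`. The polynomial `∏_v (N_X(v) + N_X(par v))` has
nonnegative coefficients, and each factor contains `X_v` since `v` is a neighbour of `par v`;
hence the multilinear monomial `∏_v X_v` has a positive coefficient, and the Combinatorial
Nullstellensatz provides `g`.
-/

/-- The sum of the values of `f` over the neighborhood of `u` in `G`. -/
noncomputable def nsum {V : Type*} [Fintype V] {M : Type*} [AddCommMonoid M]
    (G : SimpleGraph V) (f : V → M) (u : V) : M :=
  letI := Classical.decRel G.Adj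
  ∑ x ∈ G.neighborFinset u, f x

open Finset

namespace MvPolynomial

variable {σ R : Type*} [CommSemiring R] [PartialOrder R] [IsOrderedRing R]

theorem coeff_prod_nonneg {ι : Type*} (s : Finset ι) (p : ι → MvPolynomial σ R)
    (hp : ∀ i ∈ s, ∀ m, 0 ≤ coeff m (p i)) (m : σ →₀ ℕ) :
    0 ≤ coeff m (∏ i ∈ s, p i) := by
  classical
  refine prod_induction p (fun q => ∀ m, 0 ≤ coeff m q) ?_ ?_ hp m
  · intro a b ha hb m
    rw [coeff_mul]
    exact sum_nonneg fun x _ => mul_nonneg (ha _) (hb _)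
  · intro m
    rw [coeff_one]
    split_ifs <;> simp

theorem prod_coeff_le_coeff_prod {ι : Type*} (s : Finset ι) (p : ι → MvPolynomial σ R)
    (hp : ∀ i ∈ s, ∀ m, 0 ≤ coeff m (p i)) (m : ι → σ →₀ ℕ) :
    ∏ i ∈ s, coeff (m i) (p i) ≤ coeff (∑ i ∈ s, m i) (∏ i ∈ s, p i) := by
  classical
  induction s using Finset.induction_on with
  | empty => simp
  | insert a s ha ih =>
    have hpa := hp a (mem_insert_self a s)
    have hs : ∀ i ∈ s, ∀ m, 0 ≤ coeff m (p i) := fun i hi => hp i (mem_insert_of_mem hi)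
    rw [prod_insert ha, prod_insert ha, sum_insert ha, coeff_mul]
    calc coeff (m a) (p a) * ∏ i ∈ s, coeff (m i) (p i)
        ≤ coeff (m a) (p a) * coeff (∑ i ∈ s, m i) (∏ i ∈ s, p i) :=
          mul_le_mul_of_nonneg_left (ih hs) (hpa _)
      _ ≤ _ := by
          refine single_le_sum (f := fun x : (σ →₀ ℕ) × (σ →₀ ℕ) =>
              coeff x.1 (p a) * coeff x.2 (∏ i ∈ s, p i))
            (fun x _ => mul_nonneg (hpa _) (coeff_prod_nonneg s p hs _))
            (a := (m a, ∑ i ∈ s, m i)) ?_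
          simp

end MvPolynomial

open MvPolynomial SimpleGraph

theorem SimpleGraph.IsTree.exists_parent {V : Type*} {T : SimpleGraph V} (hT : T.IsTree) :
    ∃ par : V → V, ∀ ⦃u w⦄, T.Adj u w → par u = w ∨ par w = u := by
  obtain ⟨z⟩ := hT.connected.nonempty
  choose P hP using fun v => (hT.connected z v).exists_isPath
  refine ⟨fun v => (P v).penultimate, fun u w h => ?_⟩
  by_cases hw : w ∈ (P u).support
  · exact .inl (hT.isAcyclic.eq_penultimate_of_adj_end (hP u) h hw).symm
  · have hu :=
      hT.isAcyclic.mem_support_of_ne_mem_support_of_adj_of_isPath (hP w) (hP u) h.symm hw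
    exact .inr (hT.isAcyclic.eq_penultimate_of_adj_end (hP w) h.symm hu).symm

theorem SimpleGraph.IsBipartite.exists_sign {V K : Type*} [Ring K] {G : SimpleGraph V}
    (hG : G.IsBipartite) :
    ∃ δ : V → K, (∀ v, δ v * δ v = 1) ∧ ∀ ⦃u w⦄, G.Adj u w → δ w = -δ u := by
  obtain ⟨C⟩ := hG
  refine ⟨fun v => if C v = 0 then 1 else -1, fun v => by dsimp only; split_ifs <;> simp,
    fun u w h => ?_⟩
  have hC := C.valid h
  show (if C w = 0 then 1 else -1) = -(if C u = 0 then 1 else -1)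
  generalize C u = a at hC
  generalize C w = b at hC
  fin_cases a <;> fin_cases b <;> simp_all

section nsum

variable {V K : Type*} [Fintype V] (G : SimpleGraph V)

theorem nsum_eq_sum_neighborFinset [DecidableRel G.Adj] {M : Type*} [AddCommMonoid M]
    (f : V → M) (u : V) : nsum G f u = ∑ x ∈ G.neighborFinset u, f x := by
  rw [nsum]
  exact sum_congr (by ext; simp) fun _ _ => rfl

theorem nsum_mul_of_adj_eq_neg [CommRing K] {δ : V → K}
    (hδ : ∀ ⦃u w⦄, G.Adj u w → δ w = -δ u) (g : V → K) (u : V) :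
    nsum G (fun x => δ x * g x) u = -δ u * nsum G g u := by
  classical
  rw [nsum_eq_sum_neighborFinset, nsum_eq_sum_neighborFinset, mul_sum]
  exact sum_congr rfl fun x hx => by rw [hδ ((mem_neighborFinset _ _ _).1 hx)]

theorem nsum_mul_sub_nsum_mul_of_adj [CommRing K] {δ : V → K}
    (hδ : ∀ ⦃u w⦄, G.Adj u w → δ w = -δ u) (g : V → K) {u w : V} (h : G.Adj u w) :
    nsum G (fun x => δ x * g x) u - nsum G (fun x => δ x * g x) w =
      -δ u * (nsum G g u + nsum G g w) := by
  rw [nsum_mul_of_adj_eq_neg G hδ, nsum_mul_of_adj_eq_neg G hδ, hδ h]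
  ring

theorem eval_nsum_X [CommSemiring K] (g : V → K) (u : V) :
    eval g (nsum G X u) = nsum G g u := by
  classical
  simp [nsum_eq_sum_neighborFinset, map_sum]

theorem isHomogeneous_nsum_X [CommSemiring K] (u : V) :
    (nsum G (X : V → MvPolynomial V K) u).IsHomogeneous 1 := by
  classical
  rw [nsum_eq_sum_neighborFinset]
  exact IsHomogeneous.sum _ _ _ fun x _ => isHomogeneous_X K x

theorem coeff_single_nsum_X [CommSemiring K] [DecidableRel G.Adj] (u v : V) :
    coeff (Finsupp.single v 1) (nsum G (X : V → MvPolynomial V K) u) =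
      if G.Adj u v then 1 else 0 := by
  classical
  simp [nsum_eq_sum_neighborFinset, coeff_sum, coeff_X, Finsupp.single_left_inj]

theorem coeff_nsum_X_nonneg [CommSemiring K] [PartialOrder K] [IsOrderedRing K]
    (m : V →₀ ℕ) (u : V) : 0 ≤ coeff m (nsum G (X : V → MvPolynomial V K) u) := by
  classical
  rw [nsum_eq_sum_neighborFinset, coeff_sum]
  exact sum_nonneg fun x _ => by rw [coeff_X]; split_ifs <;> simp

end nsum

section choice

variable {V K : Type*} [Fintype V] [Field K] [LinearOrder K] [IsStrictOrderedRing K]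
  (G : SimpleGraph V)

theorem exists_mem_forall_nsum_add_nsum_ne_zero (par : V → V) (L : V → Finset K)
    (hL : ∀ v, 2 ≤ #(L v)) :
    ∃ g : V → K, (∀ v, g v ∈ L v) ∧
      ∀ v, G.Adj v (par v) → nsum G g v + nsum G g (par v) ≠ 0 := by
  classical
  set S := univ.filter fun v => G.Adj v (par v)
  set F : V → MvPolynomial V K := fun v => nsum G X v + nsum G X (par v)
  set t : V →₀ ℕ := ∑ v ∈ S, Finsupp.single v 1
  have hF : ∀ v ∈ S, ∀ m, 0 ≤ coeff m (F v) := fun v _ m => by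
    rw [coeff_add]
    exact add_nonneg (coeff_nsum_X_nonneg G m v) (coeff_nsum_X_nonneg G m _)
  have hcoeff : coeff t (∏ v ∈ S, F v) ≠ 0 := by
    refine (zero_lt_one.trans_le ?_).ne'
    calc (1 : K) = ∏ v ∈ S, coeff (Finsupp.single v 1) (F v) := by
          refine (prod_eq_one fun v hv => ?_).symm
          simp [F, coeff_single_nsum_X, (mem_filter.1 hv).2.symm]
      _ ≤ coeff t (∏ v ∈ S, F v) := prod_coeff_le_coeff_prod S F hF _
  have hhom : (∏ v ∈ S, F v).IsHomogeneous #S := by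
    simpa using IsHomogeneous.prod S F (fun _ => 1) fun v _ =>
      (isHomogeneous_nsum_X G v).add (isHomogeneous_nsum_X G (par v))
  have hdeg : (∏ v ∈ S, F v).totalDegree = t.degree := by
    rw [hhom.totalDegree fun h => hcoeff (by rw [h, coeff_zero])]
    simp [t, map_sum, Finsupp.degree_single]
  have ht : ∀ v, t v < #(L v) := fun v => by
    have := hL v
    simp only [t, Finsupp.finsetSum_apply, Finsupp.single_apply, sum_ite_eq']
    split_ifs <;> omega
  obtain ⟨g, hgL, hg⟩ := combinatorial_nullstellensatz_exists_eval_nonzero _ t hcoeff hdeg L ht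
  refine ⟨g, hgL, fun v hv => ?_⟩
  simp only [F, map_prod, map_add, eval_nsum_X] at hg
  exact prod_ne_zero_iff.1 hg v (mem_filter.2 ⟨mem_univ v, hv⟩)

theorem exists_additive_choice_of_isBipartite (hG : G.IsBipartite) (par : V → V)
    (hpar : ∀ ⦃u w⦄, G.Adj u w → par u = w ∨ par w = u) (L : V → Finset K)
    (hL : ∀ v, 2 ≤ #(L v)) :
    ∃ f : V → K, (∀ v, f v ∈ L v) ∧ ∀ ⦃u w⦄, G.Adj u w → nsum G f u ≠ nsum G f w := by
  obtain ⟨δ, hδsq, hδ⟩ := hG.exists_sign (K := K)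
  have hδne : ∀ v, δ v ≠ 0 := fun v => left_ne_zero_of_mul_eq_one (hδsq v)
  obtain ⟨g, hgL, hg⟩ := exists_mem_forall_nsum_add_nsum_ne_zero G par
    (fun v => (L v).image (δ v * ·))
    fun v => by rw [card_image_of_injective _ (mul_right_injective₀ (hδne v))]; exact hL v
  refine ⟨fun v => δ v * g v, fun v => ?_, fun u w h => ?_⟩
  · obtain ⟨y, hy, hgy⟩ := mem_image.1 (hgL v)
    show δ v * g v ∈ L v
    rwa [← hgy, ← mul_assoc, hδsq, one_mul]
  · have hsum : nsum G g u + nsum G g w ≠ 0 := by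
      rcases hpar h with rfl | rfl
      · exact hg u h
      · exact add_comm (nsum G g _) _ ▸ hg w h.symm
    rw [← sub_ne_zero, nsum_mul_sub_nsum_mul_of_adj G hδ g h]
    exact mul_ne_zero (neg_ne_zero.2 (hδne u)) hsum

end choice

/-- Every finite tree has an additive coloring from arbitrary lists of size two:
if `T` is a tree and each vertex `v` carries a list `L v` of `2` distinct reals,
then there is a choice `f v ∈ L v` such that adjacent vertices get different
neighborhood sums. -/
theorem tree_additive_choice_from_lists
    {V : Type*} [Fintype V] (T : SimpleGraph V) (htree : T.IsTree)
    (L : V → Finset ℝ) (hL : ∀ v, (L v).card = 2) :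
    ∃ f : V → ℝ, (∀ v, f v ∈ L v) ∧
      ∀ ⦃u v : V⦄, T.Adj u v → nsum T f u ≠ nsum T f v := by
  obtain ⟨par, hpar⟩ := htree.exists_parent
  exact exists_additive_choice_of_isBipartite T htree.isBipartite par hpar L
    fun v => (hL v).ge
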